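/- On skew fluctuating tableaux of length n with r rows: (i) promotion P is a bijection from tableaux of type (c_1,…,c_n) to tableaux of type (c_2,…,c_n,c_1); (ii) E ∘ E = id and E* ∘ E* = id; (iii) E* ∘ E = P^n and E ∘ E* = P^{−n}; (iv) P ∘ E = E ∘ P^{−1} and P ∘ E* = E* ∘ P^{−1}. In particular, P and E generate a representation of the infinite dihedral group, as do P and E*. -/

import Mathlib

open scoped Classical

noncomputable section

namespace FT

/-- A (raw) `r`-row integer vector; generalized partitions are the antitone ones. -/
abbrev GP (r : ℕ) := Fin r → ℤ

/-- The weakly decreasing rearrangement of a tuple. -/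
def sortDesc {r : ℕ} (α : GP r) : GP r := fun i => (α ∘ Tuple.sort α) i.rev

/-- Standard basis vector (0-indexed). -/
def eV {r : ℕ} (a : Fin r) : GP r := fun i => if i = a then 1 else 0

/-- Standard basis vector with 1-indexed row `a` (zero if out of range). -/
def eN (r : ℕ) (a : ℕ) : GP r := fun i => if (i : ℕ) + 1 = a then 1 else 0

/-- Indicator vector of a set of rows. -/
def indV {r : ℕ} (S : Finset (Fin r)) : GP r := fun i => if i ∈ S then 1 else 0

/-- `colStep r c μ λ`: `λ` is obtained from `μ` by adding (if `c ≥ 0`) or removing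
(if `c ≤ 0`) a skew column of `|c|` boxes. -/
def colStep (r : ℕ) (c : ℤ) (μ lam : GP r) : Prop :=
  ∃ S : Finset (Fin r), S.card = c.natAbs ∧
    (if 0 ≤ c then lam = μ + indV S else lam = μ - indV S)

/-- Skew fluctuating tableau of length `n` and type `c` (recorded at indices `0,…,n`;
values of `T` and `c` beyond those indices are irrelevant). -/
def IsSkewFT (r n : ℕ) (T : ℕ → GP r) (c : ℕ → ℤ) : Prop :=
  (∀ k ≤ n, Antitone (T k)) ∧ ∀ j < n, colStep r (c j) (T j) (T (j + 1))

/-- (Non-skew) fluctuating tableau: starts at the empty shape. -/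
def IsFT (r n : ℕ) (T : ℕ → GP r) (c : ℕ → ℤ) : Prop :=
  IsSkewFT r n T c ∧ T 0 = 0

/-- Rectangular: the final shape is constant. -/
def Rect (r n : ℕ) (T : ℕ → GP r) : Prop := ∃ m : ℤ, ∀ i, T n i = m

/-- Bender–Knuth involution `BK_i` (for `1 ≤ i ≤ n-1`). -/
def BK {r : ℕ} (i : ℕ) (T : ℕ → GP r) : ℕ → GP r :=
  fun k => if k = i then sortDesc (T (i + 1) + T (i - 1) - T i) else T k

/-- `BKseg a m = BK (a+m-1) ∘ ⋯ ∘ BK a` (apply `BK a` first). -/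
def BKseg {r : ℕ} (a : ℕ) : ℕ → (ℕ → GP r) → ℕ → GP r
  | 0 => id
  | m + 1 => BK (a + m) ∘ BKseg a m

/-- Promotion `P = BK_{n-1} ∘ ⋯ ∘ BK_1` on length-`n` tableaux. -/
def promo {r : ℕ} (n : ℕ) (T : ℕ → GP r) : ℕ → GP r := BKseg 1 (n - 1) T

/-- `BKsegRev a m = BK a ∘ ⋯ ∘ BK (a+m-1)` (apply `BK (a+m-1)` first). -/
def BKsegRev {r : ℕ} (a : ℕ) : ℕ → (ℕ → GP r) → ℕ → GP r
  | 0 => id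
  | m + 1 => BKsegRev a m ∘ BK (a + m)

/-- Inverse of promotion: `P⁻¹ = BK_1 ∘ ⋯ ∘ BK_{n-1}`. -/
def promoInv {r : ℕ} (n : ℕ) (T : ℕ → GP r) : ℕ → GP r := BKsegRev 1 (n - 1) T

def evacAux {r : ℕ} : ℕ → (ℕ → GP r) → ℕ → GP r
  | 0, T => T
  | m + 1, T => evacAux m (BKseg 1 (m + 1) T)

/-- Evacuation `E = BK_1 ∘ (BK_2∘BK_1) ∘ ⋯ ∘ (BK_{n-1}∘⋯∘BK_1)`. -/
def evac {r : ℕ} (n : ℕ) (T : ℕ → GP r) : ℕ → GP r := evacAux (n - 1) T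

def devacAux {r : ℕ} (n : ℕ) : ℕ → (ℕ → GP r) → ℕ → GP r
  | 0, T => T
  | m + 1, T => BKseg (n - (m + 1)) (m + 1) (devacAux n m T)

/-- Dual evacuation `E* = (BK_{n-1}∘⋯∘BK_1) ∘ (BK_{n-1}∘⋯∘BK_2) ∘ ⋯ ∘ BK_{n-1}`. -/
def devac {r : ℕ} (n : ℕ) (T : ℕ → GP r) : ℕ → GP r := devacAux n (n - 1) T

/-- `rev(-v)`. -/
def revNeg {r : ℕ} (v : GP r) : GP r := fun i => - v i.rev

/-- Time reversal `τ`. -/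
def tauT {r : ℕ} (n : ℕ) (T : ℕ → GP r) : ℕ → GP r := fun k => T (n - k)

/-- `ϖ`. -/
def varpiT {r : ℕ} (T : ℕ → GP r) : ℕ → GP r := fun k => revNeg (T k)

/-- `ε`. -/
def epsT {r : ℕ} (n : ℕ) (T : ℕ → GP r) : ℕ → GP r := fun k => revNeg (T (n - k))

/-- Sign of the `j`-th step of `T` (paper indexing: step `j` goes from `λ^{j-1}` to `λ^j`). -/
def sgnStep {r : ℕ} (T : ℕ → GP r) (j : ℕ) : ℤ :=
  if T j = T (j - 1) then 0 else if T (j - 1) ≤ T j then 1 else -1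

/-- The switch involution `toggle_j` (paper indexing, `1 ≤ j ≤ n`). -/
def toggleT {r : ℕ} (j : ℕ) (T : ℕ → GP r) : ℕ → GP r :=
  fun m => if m < j then T m else fun i => T m i - sgnStep T j

/-- Number of boxes added/removed in the step from `T j` to `T (j+1)`. -/
def stepSize {r : ℕ} (T : ℕ → GP r) (j : ℕ) : ℕ :=
  (Finset.univ.filter fun i : Fin r => T (j + 1) i ≠ T j i).card

/-- Cumulative step sizes: position of `T j` inside the oscillization. -/
def cum {r : ℕ} (T : ℕ → GP r) (j : ℕ) : ℕ := ∑ j' ∈ Finset.range j, stepSize T j'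

/-- The `j`-th intermediate shape of the oscillization of the skew-column step `μ → λ`:
boxes are added smallest-row-first and removed largest-row-first. -/
def oscStep {r : ℕ} (μ lam : GP r) (j : ℕ) : GP r := fun i =>
  let S := Finset.univ.filter fun i' : Fin r => lam i' ≠ μ i'
  if i ∈ S ∧ (if μ i < lam i then (S.filter fun i' => i' ≤ i).card ≤ j
              else (S.filter fun i' => i ≤ i').card ≤ j)
  then lam i else μ i

/-- Largest index `j ≤ n` with `cum T j ≤ k`. -/
def stdIdx {r : ℕ} (n : ℕ) (T : ℕ → GP r) (k : ℕ) : ℕ :=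
  ((Finset.range (n + 1)).filter fun j => cum T j ≤ k).sup id

/-- The oscillization `std(T)` of a length-`n` tableau, a tableau of length `t = Σ|c_j|`. -/
def stdT {r : ℕ} (n : ℕ) (T : ℕ → GP r) : ℕ → GP r := fun k =>
  if stdIdx n T k = n then T n
  else oscStep (T (stdIdx n T k)) (T (stdIdx n T k + 1)) (k - cum T (stdIdx n T k))

/-- Rows of the promotion–evacuation growth diagram: `PE t S u` is `P^u(S)`
for a length-`t` (oscillating) tableau `S`. -/
def PE {r : ℕ} (t : ℕ) (S : ℕ → GP r) (u : ℕ) : ℕ → GP r := (promo t)^[u] S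

/-- `i ∈ {1,…,r-1}` is recorded at cell `(u,v)` of the growth diagram of `S`
(rows 1-indexed; `λ^{u,v} = P^u(S)(v-u)`). -/
def recorded (r t : ℕ) (S : ℕ → GP r) (i u v : ℕ) : Prop :=
  ∃ a b : Fin r,
    (PE t S (u - 1) (v - u) = PE t S u (v - u - 1) + eV a ∧
     PE t S (u - 1) (v - u + 1) = PE t S u (v - u) + eV b ∧
     (a : ℕ) < i ∧ i ≤ (b : ℕ))
    ∨
    (PE t S u (v - u - 1) = PE t S (u - 1) (v - u) + eV a ∧
     PE t S u (v - u) = PE t S (u - 1) (v - u + 1) + eV b ∧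
     (b : ℕ) < i ∧ i ≤ (a : ℕ))

/-- `i ∈ PM(T)_{u,v}` for an off-diagonal entry of the promotion matrix of `T`
(`u, v ∈ {1,…,t}`, `1 ≤ i ≤ r-1`), using the oscillization `std(T)`. -/
def PMmem (r n t : ℕ) (T : ℕ → GP r) (i u v : ℕ) : Prop :=
  1 ≤ u ∧ u ≤ t ∧ 1 ≤ v ∧ v ≤ t ∧ u ≠ v ∧ 1 ≤ i ∧ i ≤ r - 1 ∧
    recorded r t (stdT n T) i u (if u < v then v else v + t)

/-- Graph of the partial promotion function `prom_i(T)`: `prom_i(T)(u) = v`.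
By convention `prom_0 = prom_r = id` on `{1,…,t}`. -/
def promRel (r n t : ℕ) (T : ℕ → GP r) (i u v : ℕ) : Prop :=
  if i = 0 ∨ i = r then 1 ≤ u ∧ u ≤ t ∧ u = v else PMmem r n t T i u v

/-- Sum of the first `i` entries (1-indexed prefix sums). -/
def pSum {r : ℕ} (v : GP r) (i : ℕ) : ℤ :=
  ∑ j ∈ Finset.univ.filter (fun j : Fin r => (j : ℕ) < i), v j

/-- The filled oscillized local-rule grid: row index `k` counts down from the top row
(`k = 0` is `std(λ → ν)`), column index `q` goes right; the left column is
`std(κ → λ)` read so that `grid cA κ λ ν k 0 = std(κ→λ)` at position `cA - k`. -/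
def grid {r : ℕ} (cA : ℕ) (κ lam ν : GP r) : ℕ → ℕ → GP r
  | 0, q => oscStep lam ν q
  | k + 1, 0 => oscStep κ lam (cA - (k + 1))
  | k + 1, q + 1 =>
      sortDesc (grid cA κ lam ν k (q + 1) + grid cA κ lam ν (k + 1) q -
        grid cA κ lam ν k q)
  termination_by k q => (k, q)

/-- 1-indexed entry of a vector (0 if out of range). -/
def ent {r : ℕ} (v : GP r) (h : ℕ) : ℤ := if hh : h - 1 < r then v ⟨h - 1, hh⟩ else 0

/-- The chain `j_0 = 1, j_h = ` least `h`-balance point of the lattice word of `T`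
weakly after `j_{h-1}` (in `{1,…,n}`), `none` once undefined. An index `j` is an
`h`-balance point iff `(T j)_h = (T j)_{h+1}` (1-indexed rows). -/
def jChain (r n : ℕ) (T : ℕ → GP r) : ℕ → Option ℕ
  | 0 => some 1
  | h + 1 =>
    match jChain r n T h with
    | none => none
    | some jp =>
      if H : ∃ j, jp ≤ j ∧ j ≤ n ∧ ent (T j) (h + 1) = ent (T j) (h + 2) then
        some (Nat.find H)
      else none

/-- `k`: the largest `h ≤ r-1` such that `j_1, …, j_h` are all defined. -/
def kVal (r n : ℕ) (T : ℕ → GP r) : ℕ :=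
  ((Finset.range r).filter fun h => (jChain r n T h).isSome).sup id

/-- `j_h`, defaulting to `0` when undefined. -/
def jval (r n : ℕ) (T : ℕ → GP r) (h : ℕ) : ℕ := (jChain r n T h).getD 0

/-- `ω_c` for `c ∈ {0,±1,…,±r}`: top-justified column of `c` ones if `c ≥ 0`,
bottom-justified column of `|c|` minus-ones if `c < 0`. -/
def omegaGP (r : ℕ) (c : ℤ) : GP r := fun i =>
  if 0 ≤ c then (if (i : ℕ) < c.natAbs then 1 else 0)
  else (if r - c.natAbs ≤ (i : ℕ) then -1 else 0)

/-- The extremal fluctuating tableau of type `c`: partial sums of the `ω_{c_j}`. -/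
def extremal (r : ℕ) (c : ℕ → ℤ) (k : ℕ) : GP r := ∑ j ∈ Finset.range k, omegaGP r (c j)

/-- Lexicographic order: the first nonzero entry of `β - α` is positive. -/
def ltLex {r : ℕ} (α β : GP r) : Prop := ∃ i : Fin r, (∀ j, j < i → α j = β j) ∧ α i < β i

/-- Cumulative sums of `|c_j|` (block boundaries). -/
def cumC (c : ℕ → ℤ) (j : ℕ) : ℕ := ∑ j' ∈ Finset.range j, (c j').natAbs

/-- Entry `(u,v)` (for `u,v ∈ {1,…,n}`) of the reduced promotion matrix `PMr^i(T)`: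
the number of cells in the block `B_u × B_v` whose promotion-matrix entry contains `i`. -/
def PMr (r n t : ℕ) (T : ℕ → GP r) (c : ℕ → ℤ) (i u v : ℕ) : ℕ :=
  (((Finset.Icc (cumC c (u - 1) + 1) (cumC c u)) ×ˢ
    (Finset.Icc (cumC c (v - 1) + 1) (cumC c v))).filter
      fun p => PMmem r n t T i p.1 p.2).card

/-- The set of `r`-row fluctuating tableaux of length `n`, shape `lam`, type `c`,
in bundled (finitely-indexed) form. -/
def FTset (r n : ℕ) (lam : GP r) (c : Fin n → ℤ) : Set (Fin (n + 1) → GP r) :=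
  {T | (∀ k, Antitone (T k)) ∧ T 0 = 0 ∧ T (Fin.last n) = lam ∧
       ∀ j : Fin n, colStep r (c j) (T j.castSucc) (T j.succ)}


section AuxProofs
variable {r : ℕ}

lemma antitone_sortDesc (v : GP r) : Antitone (sortDesc v) := by
  intro i j hij
  exact Tuple.monotone_sort v (Fin.rev_le_rev.mpr hij)

def sortPerm (v : GP r) : Equiv.Perm (Fin r) := Fin.revPerm.trans (Tuple.sort v)

lemma sortDesc_eq_comp (v : GP r) : sortDesc v = fun i => v (sortPerm v i) := rfl

/-- threshold counts -/
def Ncnt (v : GP r) (m : ℤ) : ℕ := (Finset.univ.filter fun j => m ≤ v j).card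

lemma Ncnt_comp_perm (v : GP r) (σ : Equiv.Perm (Fin r)) (m : ℤ) :
    Ncnt (fun i => v (σ i)) m = Ncnt v m := by
  unfold Ncnt
  apply Finset.card_bij (fun j _ => σ j)
  · intro a ha; simp at ha ⊢; exact ha
  · intro a _ b _ h; exact σ.injective h
  · intro b hb; exact ⟨σ.symm b, by simpa using hb, by simp⟩

lemma Ncnt_sortDesc (v : GP r) (m : ℤ) : Ncnt (sortDesc v) m = Ncnt v m :=
  Ncnt_comp_perm v (sortPerm v) m

lemma sum_sortDesc (v : GP r) : ∑ i, sortDesc v i = ∑ i, v i :=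
  Equiv.sum_comp (sortPerm v) v

lemma le_iff_lt_Ncnt {v : GP r} (hv : Antitone v) {m : ℤ} {j : Fin r} :
    m ≤ v j ↔ (j : ℕ) < Ncnt v m := by
  constructor
  · intro h
    have hsub : Finset.Iic j ⊆ Finset.univ.filter fun j' => m ≤ v j' := by
      intro j' hj'; simp at hj' ⊢; exact le_trans h (hv hj')
    have := Finset.card_le_card hsub
    rw [Fin.card_Iic] at this
    unfold Ncnt
    omega
  · intro h
    by_contra hne
    have hsub : (Finset.univ.filter fun j' => m ≤ v j') ⊆ Finset.Iio j := by
      intro j' hj'; simp at hj' ⊢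
      by_contra hlt
      push_neg at hlt
      exact hne (le_trans hj' (hv hlt))
    have := Finset.card_le_card hsub
    rw [Fin.card_Iio] at this
    unfold Ncnt at h
    omega

lemma eq_of_Ncnt_eq {x y : GP r} (hx : Antitone x) (hy : Antitone y)
    (h : ∀ m, Ncnt x m = Ncnt y m) : x = y := by
  funext j
  have h1 : x j ≤ y j := by
    have := (le_iff_lt_Ncnt hx (m := x j) (j := j)).mp le_rfl
    rw [h] at this
    exact (le_iff_lt_Ncnt hy).mpr this
  have h2 : y j ≤ x j := by
    have := (le_iff_lt_Ncnt hy (m := y j) (j := j)).mp le_rfl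
    rw [← h] at this
    exact (le_iff_lt_Ncnt hx).mpr this
  omega

variable {r : ℕ}
lemma card_filter_eq_sum (s : Finset (Fin r)) (p : Fin r → Prop) :
    (s.filter p).card = ∑ j, if j ∈ s ∧ p j then 1 else 0 := by
  rw [show s.filter p = Finset.univ.filter (fun j => j ∈ s ∧ p j) by
    ext j; simp]
  exact Finset.card_filter _ _

lemma sum_indV (S : Finset (Fin r)) : ∑ j, indV S j = (S.card : ℤ) := by
  unfold indV
  rw [Finset.sum_ite_mem, Finset.univ_inter, Finset.sum_const]
  simp

lemma Ncnt_add_indV (x : GP r) (S : Finset (Fin r)) (m : ℤ) :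
    Ncnt (x + indV S) m = Ncnt x m + (S.filter fun j => x j = m - 1).card := by
  rw [Ncnt, Ncnt, Finset.card_filter, Finset.card_filter, Finset.card_filter,
    ← Finset.univ_inter S, ← Finset.sum_ite_mem, ← Finset.sum_add_distrib]
  apply Finset.sum_congr rfl
  intro j _
  simp only [Pi.add_apply, indV]
  by_cases h : j ∈ S <;> simp [h] <;> split_ifs <;> omega

lemma Ncnt_sub_indV (x : GP r) (S : Finset (Fin r)) (m : ℤ) :
    Ncnt x m = Ncnt (x - indV S) m + (S.filter fun j => x j = m).card := by
  rw [Ncnt, Ncnt, Finset.card_filter, Finset.card_filter, Finset.card_filter,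
    ← Finset.univ_inter S, ← Finset.sum_ite_mem, ← Finset.sum_add_distrib]
  apply Finset.sum_congr rfl
  intro j _
  simp only [Pi.sub_apply, indV]
  by_cases h : j ∈ S <;> simp [h] <;> split_ifs <;> omega

lemma Ncnt_mono {u v : GP r} (h : ∀ j, u j ≤ v j) (m : ℤ) : Ncnt u m ≤ Ncnt v m := by
  apply Finset.card_le_card
  intro j hj
  simp only [Finset.mem_filter, Finset.mem_univ, true_and] at hj ⊢
  exact le_trans hj (h j)

lemma Ncnt_shift {u v : GP r} (h : ∀ j, u j ≤ v j + 1) (m : ℤ) :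
    Ncnt u m ≤ Ncnt v (m - 1) := by
  apply Finset.card_le_card
  intro j hj
  simp only [Finset.mem_filter, Finset.mem_univ, true_and] at hj ⊢
  have := h j; omega

lemma indV_nonneg (S : Finset (Fin r)) (j : Fin r) : 0 ≤ indV S j := by
  unfold indV; split <;> omega

lemma indV_le_one (S : Finset (Fin r)) (j : Fin r) : indV S j ≤ 1 := by
  unfold indV; split <;> omega

lemma repr_add {x y : GP r} (hx : Antitone x) (hy : Antitone y) (S : Finset (Fin r))
    (hN : ∀ m, Ncnt y m = Ncnt (x + indV S) m)
    (hsum : ∑ j, y j = ∑ j, (x + indV S) j) :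
    ∃ S' : Finset (Fin r), S'.card = S.card ∧ y = x + indV S' ∧
      ∀ v : ℤ, (S.filter fun j => x j = v).card = (S'.filter fun j => x j = v).card := by
  have hsand : ∀ j, x j ≤ y j ∧ y j ≤ x j + 1 := by
    intro j
    constructor
    · have h1 : (j : ℕ) < Ncnt x (x j) := (le_iff_lt_Ncnt hx).mp le_rfl
      have h2 : Ncnt x (x j) ≤ Ncnt y (x j) := by
        rw [hN]; exact Ncnt_mono (fun j' => by simpa using indV_nonneg S j') _
      exact (le_iff_lt_Ncnt hy).mpr (lt_of_lt_of_le h1 h2)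
    · have h1 : (j : ℕ) < Ncnt y (y j) := (le_iff_lt_Ncnt hy).mp le_rfl
      have h2 : Ncnt y (y j) ≤ Ncnt x (y j - 1) := by
        rw [hN]
        exact Ncnt_shift (fun j' => by
          simp only [Pi.add_apply]
          have := indV_le_one S j'; omega) _
      have := (le_iff_lt_Ncnt hx).mpr (lt_of_lt_of_le h1 h2)
      omega
  set S' : Finset (Fin r) := Finset.univ.filter fun j => y j ≠ x j with hS'
  have heq : y = x + indV S' := by
    funext j
    have := hsand j
    simp only [Pi.add_apply, indV, hS', Finset.mem_filter, Finset.mem_univ, true_and]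
    split_ifs with h
    · omega
    · push_neg at h; omega
  have hcard : S'.card = S.card := by
    have h1 : ∑ j, y j = (∑ j, x j) + (S.card : ℤ) := by
      rw [hsum]; simp only [Pi.add_apply]; rw [Finset.sum_add_distrib, sum_indV]
    have h2 : ∑ j, y j = (∑ j, x j) + (S'.card : ℤ) := by
      rw [heq]; simp only [Pi.add_apply]; rw [Finset.sum_add_distrib, sum_indV]
    have : (S'.card : ℤ) = (S.card : ℤ) := by omega
    exact_mod_cast this
  refine ⟨S', hcard, heq, fun v => ?_⟩
  have e1 := Ncnt_add_indV x S (v + 1)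
  have e2 := Ncnt_add_indV x S' (v + 1)
  have e3 : Ncnt y (v + 1) = Ncnt (x + indV S) (v + 1) := hN _
  rw [heq] at e3
  simp only [add_sub_cancel_right] at e1 e2
  omega

lemma repr_sub {x y : GP r} (hx : Antitone x) (hy : Antitone y) (S : Finset (Fin r))
    (hN : ∀ m, Ncnt y m = Ncnt (x - indV S) m)
    (hsum : ∑ j, y j = ∑ j, (x - indV S) j) :
    ∃ S' : Finset (Fin r), S'.card = S.card ∧ y = x - indV S' ∧
      ∀ v : ℤ, (S.filter fun j => x j = v).card = (S'.filter fun j => x j = v).card := by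
  have hsand : ∀ j, x j - 1 ≤ y j ∧ y j ≤ x j := by
    intro j
    constructor
    · have h1 : (j : ℕ) < Ncnt x (x j) := (le_iff_lt_Ncnt hx).mp le_rfl
      have h2 : Ncnt x (x j) ≤ Ncnt y (x j - 1) := by
        rw [hN]
        exact Ncnt_shift (fun j' => by
          simp only [Pi.sub_apply]
          have := indV_le_one S j'; have := indV_nonneg S j'; omega) _
      have := (le_iff_lt_Ncnt hy).mpr (lt_of_lt_of_le h1 h2)
      omega
    · have h1 : (j : ℕ) < Ncnt y (y j) := (le_iff_lt_Ncnt hy).mp le_rfl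
      have h2 : Ncnt y (y j) ≤ Ncnt x (y j) := by
        rw [hN]
        exact Ncnt_mono (fun j' => by
          simp only [Pi.sub_apply]
          have := indV_nonneg S j'; omega) _
      exact (le_iff_lt_Ncnt hx).mpr (lt_of_lt_of_le h1 h2)
  set S' : Finset (Fin r) := Finset.univ.filter fun j => y j ≠ x j with hS'
  have heq : y = x - indV S' := by
    funext j
    have := hsand j
    simp only [Pi.sub_apply, indV, hS', Finset.mem_filter, Finset.mem_univ, true_and]
    split_ifs with h
    · omega
    · push_neg at h; omega
  have hcard : S'.card = S.card := by
    have h1 : ∑ j, y j = (∑ j, x j) - (S.card : ℤ) := by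
      rw [hsum]; simp only [Pi.sub_apply]; rw [Finset.sum_sub_distrib, sum_indV]
    have h2 : ∑ j, y j = (∑ j, x j) - (S'.card : ℤ) := by
      rw [heq]; simp only [Pi.sub_apply]; rw [Finset.sum_sub_distrib, sum_indV]
    have : (S'.card : ℤ) = (S.card : ℤ) := by omega
    exact_mod_cast this
  refine ⟨S', hcard, heq, fun v => ?_⟩
  have e1 := Ncnt_sub_indV x S v
  have e2 := Ncnt_sub_indV x S' v
  have e3 : Ncnt y v = Ncnt (x - indV S) v := hN _
  rw [heq] at e3
  omega
variable {r : ℕ}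


lemma smul_indV_neg_one (x : GP r) (S : Finset (Fin r)) :
    x + (-1 : ℤ) • indV S = x - indV S := by
  funext j; simp; ring

lemma repr_e {e : ℤ} (he : e = 1 ∨ e = -1) {x y : GP r} (hx : Antitone x)
    (hy : Antitone y) (S : Finset (Fin r))
    (hN : ∀ m, Ncnt y m = Ncnt (x + e • indV S) m)
    (hsum : ∑ j, y j = ∑ j, (x + e • indV S) j) :
    ∃ S' : Finset (Fin r), S'.card = S.card ∧ y = x + e • indV S' ∧
      ∀ v : ℤ, (S.filter fun j => x j = v).card = (S'.filter fun j => x j = v).card := by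
  rcases he with he | he <;> subst he
  · simp only [one_smul] at hN hsum ⊢
    exact repr_add hx hy S hN hsum
  · simp only [smul_indV_neg_one] at hN hsum ⊢
    exact repr_sub hx hy S hN hsum

lemma sum_indV_level (S : Finset (Fin r)) (x : GP r) (v : ℤ) :
    ∑ j ∈ Finset.univ.filter (fun j => x j = v), indV S j
      = ((S.filter fun j => x j = v).card : ℤ) := by
  unfold indV
  rw [Finset.sum_ite_mem]
  rw [show Finset.univ.filter (fun j => x j = v) ∩ S = S.filter (fun j => x j = v) by
    ext j; simp [and_comm]]
  simp

lemma Ncnt_addE_eq {e : ℤ} (he : e = 1 ∨ e = -1) {x : GP r} {S S' : Finset (Fin r)}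
    (h : ∀ v : ℤ, (S.filter fun j => x j = v).card = (S'.filter fun j => x j = v).card) :
    ∀ m, Ncnt (x + e • indV S') m = Ncnt (x + e • indV S) m := by
  intro m
  rcases he with he | he <;> subst he
  · simp only [one_smul]
    rw [Ncnt_add_indV, Ncnt_add_indV, h]
  · simp only [smul_indV_neg_one]
    have e1 := Ncnt_sub_indV x S m
    have e2 := Ncnt_sub_indV x S' m
    have := h m
    omega

lemma BKcore {μ lam ν : GP r} {c d : ℤ} (hμ : Antitone μ) (hl : Antitone lam)
    (hν : Antitone ν) (hc : colStep r c μ lam) (hd : colStep r d lam ν) :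
    Antitone (sortDesc (ν + μ - lam)) ∧ colStep r d μ (sortDesc (ν + μ - lam)) ∧
    colStep r c (sortDesc (ν + μ - lam)) ν ∧
    sortDesc (ν + μ - sortDesc (ν + μ - lam)) = lam := by
  obtain ⟨S, hScard, hSif⟩ := hc
  obtain ⟨T, hTcard, hTif⟩ := hd
  set ec : ℤ := if 0 ≤ c then 1 else -1 with hecdef
  set ed : ℤ := if 0 ≤ d then 1 else -1 with heddef
  have hec : ec = 1 ∨ ec = -1 := by unfold ec; split <;> simp
  have hed : ed = 1 ∨ ed = -1 := by unfold ed; split <;> simp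
  have hSeq : lam = μ + ec • indV S := by
    unfold ec; split_ifs with h
    · simpa [h] using hSif
    · rw [smul_indV_neg_one]; simpa [h] using hSif
  have hTeq : ν = lam + ed • indV T := by
    unfold ed; split_ifs with h
    · simpa [h] using hTif
    · rw [smul_indV_neg_one]; simpa [h] using hTif
  set w : GP r := ν + μ - lam with hwdef
  have hw1 : w = μ + ed • indV T := by
    funext j
    have e1 := congrFun hSeq j
    have e2 := congrFun hTeq j
    simp only [hwdef, Pi.add_apply, Pi.sub_apply, Pi.smul_apply, smul_eq_mul] at e1 e2 ⊢
    linarith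
  have hw2 : w = ν + (-ec) • indV S := by
    funext j
    have e1 := congrFun hSeq j
    simp only [hwdef, Pi.add_apply, Pi.sub_apply, Pi.smul_apply, smul_eq_mul] at e1 ⊢
    linarith
  set lam' : GP r := sortDesc w with hlam'def
  have hl' : Antitone lam' := antitone_sortDesc w
  have hNl' : ∀ m, Ncnt lam' m = Ncnt w m := fun m => Ncnt_sortDesc w m
  have hsuml' : ∑ j, lam' j = ∑ j, w j := sum_sortDesc w
  -- T-direction representation
  obtain ⟨T', hT'card, hT'eq, hT'lvl⟩ :=
    repr_e hed hμ hl' T (fun m => by rw [hNl', hw1]) (by rw [hsuml', hw1])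
  -- S-direction representation
  have hec' : -ec = 1 ∨ -ec = -1 := by rcases hec with h | h <;> simp [h]
  obtain ⟨S', hS'card, hS'eq, _⟩ :=
    repr_e hec' hν hl' S (fun m => by rw [hNl', hw2]) (by rw [hsuml', hw2])
  have hνeq : ν = lam' + ec • indV S' := by
    funext j
    have e1 := congrFun hS'eq j
    simp only [Pi.add_apply, Pi.smul_apply, smul_eq_mul] at e1 ⊢
    linarith
  refine ⟨hl', ?_, ?_, ?_⟩
  · -- colStep r d μ lam'
    refine ⟨T', hT'card.trans hTcard, ?_⟩
    unfold ed at hT'eq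
    split_ifs with h
    · simpa [h] using hT'eq
    · rw [← smul_indV_neg_one]; simpa [h] using hT'eq
  · -- colStep r c lam' ν
    refine ⟨S', hS'card.trans hScard, ?_⟩
    unfold ec at hνeq
    split_ifs with h
    · simpa [h] using hνeq
    · rw [← smul_indV_neg_one]; simpa [h] using hνeq
  · -- involution
    have hg : ν + μ - lam' = μ + ec • indV S' := by
      funext j
      have e1 := congrFun hνeq j
      simp only [Pi.add_apply, Pi.sub_apply, Pi.smul_apply, smul_eq_mul] at e1 ⊢
      linarith
    -- pointwise identity
    have hpt : ∀ j, ec * indV S j + ed * indV T j = ec * indV S' j + ed * indV T' j := by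
      intro j
      have e1 := congrFun hSeq j
      have e2 := congrFun hTeq j
      have e3 := congrFun hT'eq j
      have e4 := congrFun hνeq j
      simp only [Pi.add_apply, Pi.smul_apply, smul_eq_mul] at e1 e2 e3 e4
      linarith
    have hlvl : ∀ v : ℤ, (S.filter fun j => μ j = v).card = (S'.filter fun j => μ j = v).card := by
      intro v
      have hsum := Finset.sum_congr rfl (fun j (_ : j ∈ Finset.univ.filter (fun j => μ j = v)) => hpt j)
      rw [Finset.sum_add_distrib, Finset.sum_add_distrib, ← Finset.mul_sum, ← Finset.mul_sum,
        ← Finset.mul_sum, ← Finset.mul_sum, sum_indV_level, sum_indV_level, sum_indV_level,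
        sum_indV_level] at hsum
      have ht := hT'lvl v
      rw [ht] at hsum
      rcases hec with h | h <;> rw [h] at hsum <;> omega
    have hNfin : ∀ m, Ncnt (sortDesc (ν + μ - lam')) m = Ncnt lam m := by
      intro m
      rw [Ncnt_sortDesc, hg, hSeq]
      exact Ncnt_addE_eq hec hlvl m
    exact eq_of_Ncnt_eq (antitone_sortDesc _) hl hNfin
variable {r : ℕ}


lemma BK_apply_ne (i k : ℕ) (h : k ≠ i) (T : ℕ → GP r) : BK i T k = T k := if_neg h

lemma BK_apply_self (i : ℕ) (T : ℕ → GP r) :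
    BK i T i = sortDesc (T (i + 1) + T (i - 1) - T i) := if_pos rfl

lemma BK_comm {i j : ℕ} (hij : i + 2 ≤ j) (T : ℕ → GP r) :
    BK i (BK j T) = BK j (BK i T) := by
  funext k
  by_cases hki : k = i
  · subst hki
    rw [BK_apply_ne j k (by omega), BK_apply_self, BK_apply_self,
      BK_apply_ne j (k+1) (by omega), BK_apply_ne j (k-1) (by omega),
      BK_apply_ne j k (by omega)]
  · by_cases hkj : k = j
    · subst hkj
      rw [BK_apply_ne i k (by omega), BK_apply_self, BK_apply_self,
        BK_apply_ne i (k+1) (by omega), BK_apply_ne i (k-1) (by omega),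
        BK_apply_ne i k (by omega)]
    · rw [BK_apply_ne i k hki, BK_apply_ne j k hkj, BK_apply_ne j k hkj,
        BK_apply_ne i k hki]

section
variable {n : ℕ} {T : ℕ → GP r} {c : ℕ → ℤ}

lemma BK_key (i : ℕ) (h1 : 1 ≤ i) (h2 : i + 1 ≤ n) (hT : IsSkewFT r n T c) :
    Antitone (sortDesc (T (i+1) + T (i-1) - T i)) ∧
    colStep r (c i) (T (i-1)) (sortDesc (T (i+1) + T (i-1) - T i)) ∧
    colStep r (c (i-1)) (sortDesc (T (i+1) + T (i-1) - T i)) (T (i+1)) ∧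
    sortDesc (T (i+1) + T (i-1) - sortDesc (T (i+1) + T (i-1) - T i)) = T i := by
  obtain ⟨hant, hcol⟩ := hT
  have hc1 : colStep r (c (i-1)) (T (i-1)) (T i) := by
    have := hcol (i-1) (by omega)
    rwa [show i - 1 + 1 = i by omega] at this
  have hc2 : colStep r (c i) (T i) (T (i+1)) := hcol i (by omega)
  exact BKcore (hant (i-1) (by omega)) (hant i (by omega)) (hant (i+1) (by omega)) hc1 hc2

lemma BK_isSkewFT (i : ℕ) (h1 : 1 ≤ i) (h2 : i + 1 ≤ n) (hT : IsSkewFT r n T c) :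
    IsSkewFT r n (BK i T)
      (fun j => if j = i - 1 then c i else if j = i then c (i - 1) else c j) := by
  have key := BK_key i h1 h2 hT
  obtain ⟨hant, hcol⟩ := hT
  constructor
  · intro k hk
    by_cases hki : k = i
    · subst hki; rw [BK_apply_self]; exact key.1
    · rw [BK_apply_ne _ _ hki]; exact hant k hk
  · intro j hj
    by_cases hj1 : j = i - 1
    · subst hj1
      simp only [if_pos rfl]
      rw [BK_apply_ne i (i-1) (by omega), show i - 1 + 1 = i by omega, BK_apply_self]
      exact key.2.1
    · by_cases hj2 : j = i
      · subst hj2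
        simp only [if_neg hj1, if_pos rfl]
        rw [BK_apply_ne j (j+1) (by omega), BK_apply_self]
        exact key.2.2.1
      · simp only [if_neg hj1, if_neg hj2]
        rw [BK_apply_ne i j hj2, BK_apply_ne i (j+1) (by omega)]
        exact hcol j hj

lemma BK_invol (i : ℕ) (h1 : 1 ≤ i) (h2 : i + 1 ≤ n) (hT : IsSkewFT r n T c) :
    BK i (BK i T) = T := by
  have key := BK_key i h1 h2 hT
  funext k
  by_cases hk : k = i
  · subst hk
    rw [BK_apply_self, BK_apply_ne k (k+1) (by omega), BK_apply_ne k (k-1) (by omega),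
      BK_apply_self]
    exact key.2.2.2
  · rw [BK_apply_ne _ _ hk, BK_apply_ne _ _ hk]
end
section Words
variable {X : Type*} (f : ℕ → X → X) (G : Set X) (n : ℕ)

def prodW : List ℕ → X → X
  | [], x => x
  | a :: l, x => f a (prodW l x)

@[simp] lemma prodW_nil (x : X) : prodW f [] x = x := rfl
@[simp] lemma prodW_cons (a : ℕ) (l : List ℕ) (x : X) :
    prodW f (a :: l) x = f a (prodW f l x) := rfl

lemma prodW_append (u v : List ℕ) (x : X) :
    prodW f (u ++ v) x = prodW f u (prodW f v x) := by
  induction u with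
  | nil => rfl
  | cons a u ih => simp [ih]

def ValidW (l : List ℕ) : Prop := ∀ i ∈ l, 1 ≤ i ∧ i + 1 ≤ n

lemma validW_append {l1 l2 : List ℕ} (h1 : ValidW n l1) (h2 : ValidW n l2) :
    ValidW n (l1 ++ l2) := by
  intro i hi
  rcases List.mem_append.mp hi with h | h
  exacts [h1 i h, h2 i h]

lemma validW_reverse {l : List ℕ} (h : ValidW n l) : ValidW n l.reverse := by
  intro i hi; exact h i (List.mem_reverse.mp hi)

variable (hf1 : ∀ i, 1 ≤ i → i + 1 ≤ n → ∀ x ∈ G, f i x ∈ G)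
  (hf2 : ∀ i, 1 ≤ i → i + 1 ≤ n → ∀ x ∈ G, f i (f i x) = x)
  (hf3 : ∀ i j, 1 ≤ i → i + 2 ≤ j → j + 1 ≤ n → ∀ x, f i (f j x) = f j (f i x))

include hf1 in
lemma prodW_mem {l : List ℕ} (hl : ValidW n l) {x : X} (hx : x ∈ G) :
    prodW f l x ∈ G := by
  induction l with
  | nil => exact hx
  | cons a l ih =>
    have ha := hl a List.mem_cons_self
    exact hf1 a ha.1 ha.2 _ (ih (fun i hi => hl i (List.mem_cons_of_mem a hi)))

include hf1 hf2 in
lemma prodW_rev_cancel {l : List ℕ} (hl : ValidW n l) {x : X} (hx : x ∈ G) :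
    prodW f l.reverse (prodW f l x) = x := by
  induction l with
  | nil => rfl
  | cons a l ih =>
    have ha := hl a List.mem_cons_self
    have hl' : ValidW n l := fun i hi => hl i (List.mem_cons_of_mem a hi)
    have hmem : prodW f l x ∈ G := prodW_mem f G n hf1 hl' hx
    rw [List.reverse_cons, prodW_append]
    show prodW f l.reverse (prodW f [a] (f a (prodW f l x))) = x
    rw [prodW_cons, prodW_nil, hf2 a ha.1 ha.2 _ hmem]
    exact ih hl'

include hf1 hf2 in
lemma prodW_cancel_rev {l : List ℕ} (hl : ValidW n l) {x : X} (hx : x ∈ G) :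
    prodW f l (prodW f l.reverse x) = x := by
  have := prodW_rev_cancel f G n hf1 hf2 (validW_reverse n hl) hx
  rwa [List.reverse_reverse] at this

include hf3 in
lemma letter_comm_word {i : ℕ} {l : List ℕ} (hl : ValidW n l)
    (hd : ∀ j ∈ l, (1 ≤ j ∧ j + 2 ≤ i ∧ i + 1 ≤ n) ∨ (1 ≤ i ∧ i + 2 ≤ j ∧ j + 1 ≤ n))
    (x : X) : f i (prodW f l x) = prodW f l (f i x) := by
  induction l with
  | nil => rfl
  | cons a l ih =>
    have ha := hd a List.mem_cons_self
    have step : f i (f a (prodW f l x)) = f a (f i (prodW f l x)) := by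
      rcases ha with ⟨h1, h2, h3⟩ | ⟨h1, h2, h3⟩
      · exact (hf3 a i h1 h2 h3 _).symm
      · exact hf3 i a h1 h2 h3 _
    rw [prodW_cons, step, ih (fun j hj => hl j (List.mem_cons_of_mem a hj))
      (fun j hj => hd j (List.mem_cons_of_mem a hj))]
    rfl

include hf3 in
lemma word_comm_word {l1 l2 : List ℕ} (hl2 : ValidW n l2)
    (hd : ∀ i ∈ l1, ∀ j ∈ l2, (1 ≤ j ∧ j + 2 ≤ i ∧ i + 1 ≤ n) ∨ (1 ≤ i ∧ i + 2 ≤ j ∧ j + 1 ≤ n))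
    (x : X) : prodW f l1 (prodW f l2 x) = prodW f l2 (prodW f l1 x) := by
  induction l1 with
  | nil => rfl
  | cons a l1 ih =>
    rw [prodW_cons, prodW_cons,
      ih (fun i hi => fun j hj => hd i (List.mem_cons_of_mem a hi) j hj),
      letter_comm_word f n hf3 hl2 (fun j hj => hd a List.mem_cons_self j hj)]

end Words

/-- `wSeg a m = [a+m-1, …, a]`. -/
def wSeg (a : ℕ) : ℕ → List ℕ
  | 0 => []
  | m + 1 => (a + m) :: wSeg a m

lemma mem_wSeg {a m i : ℕ} : i ∈ wSeg a m ↔ a ≤ i ∧ i < a + m := by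
  induction m with
  | zero => simp [wSeg]
  | succ m ih => simp [wSeg, ih]; omega

lemma wSeg_append (a l1 l2 : ℕ) : wSeg a (l1 + l2) = wSeg (a + l2) l1 ++ wSeg a l2 := by
  induction l1 with
  | zero => simp [wSeg]
  | succ l1 ih =>
    have h : l1 + 1 + l2 = (l1 + l2) + 1 := by omega
    rw [h]
    show (a + (l1 + l2)) :: wSeg a (l1 + l2) = wSeg (a + l2) (l1 + 1) ++ wSeg a l2
    rw [ih]
    show _ = ((a + l2 + l1) :: wSeg (a + l2) l1) ++ wSeg a l2
    rw [List.cons_append]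
    congr 1
    omega

def wE : ℕ → List ℕ
  | 0 => []
  | m + 1 => wE m ++ wSeg 1 (m + 1)

lemma mem_wE {m i : ℕ} : i ∈ wE m → 1 ≤ i ∧ i ≤ m := by
  induction m with
  | zero => simp [wE]
  | succ m ih =>
    intro hi
    rcases List.mem_append.mp hi with h | h
    · have := ih h; omega
    · have := mem_wSeg.mp h; omega

/-- `wDfun n a k = wSeg a (n-a) ++ wSeg (a+1) (n-a-1) ++ … ` (k blocks). -/
def wDfun (n : ℕ) : ℕ → ℕ → List ℕ
  | _, 0 => []
  | a, k + 1 => wSeg a (n - a) ++ wDfun n (a + 1) k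

lemma mem_wDfun {n a k i : ℕ} : i ∈ wDfun n a k → a ≤ i ∧ i < n := by
  induction k generalizing a with
  | zero => simp [wDfun]
  | succ k ih =>
    intro hi
    rcases List.mem_append.mp hi with h | h
    · have := mem_wSeg.mp h; omega
    · have := ih h; omega

lemma wDfun_append (n a k : ℕ) :
    wDfun n a (k + 1) = wDfun n a k ++ wSeg (a + k) (n - (a + k)) := by
  induction k generalizing a with
  | zero => simp [wDfun]
  | succ k ih =>
    show wSeg a (n - a) ++ wDfun n (a + 1) (k + 1) = (wSeg a (n - a) ++ wDfun n (a + 1) k) ++ _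
    have e : a + 1 + k = a + (k + 1) := by omega
    rw [ih (a + 1), List.append_assoc, e]

lemma validW_wSeg {n a m : ℕ} (h1 : 1 ≤ a) (h2 : a + m ≤ n) : ValidW n (wSeg a m) := by
  intro i hi; have := mem_wSeg.mp hi; omega

lemma validW_wE {n m : ℕ} (h : m + 1 ≤ n) : ValidW n (wE m) := by
  intro i hi; have := mem_wE hi; omega

lemma validW_wDfun {n a k : ℕ} (h1 : 1 ≤ a) : ValidW n (wDfun n a k) := by
  intro i hi; have := mem_wDfun hi; omega

section Alg
variable {X : Type*} (f : ℕ → X → X) (G : Set X) (n : ℕ)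
variable (hf1 : ∀ i, 1 ≤ i → i + 1 ≤ n → ∀ x ∈ G, f i x ∈ G)
  (hf2 : ∀ i, 1 ≤ i → i + 1 ≤ n → ∀ x ∈ G, f i (f i x) = x)
  (hf3 : ∀ i j, 1 ≤ i → i + 2 ≤ j → j + 1 ≤ n → ∀ x, f i (f j x) = f j (f i x))

lemma wSeg_succ (a m : ℕ) : wSeg a (m + 1) = (a + m) :: wSeg a m := rfl
lemma wE_succ (m : ℕ) : wE (m + 1) = wE m ++ wSeg 1 (m + 1) := rfl

include hf1 hf2 hf3 in
lemma lemC : ∀ m, m + 2 ≤ n → ∀ x ∈ G,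
    prodW f (wSeg 1 (m + 1)) (prodW f (wE m) x)
      = prodW f (wE m) (prodW f (wSeg 1 (m + 1)).reverse x) := by
  intro m
  induction m with
  | zero => intro h x hx; simp [wE, wSeg, prodW]
  | succ m ih =>
    intro h x hx
    have hm2 : m + 2 ≤ n := by omega
    have hvSeg : ValidW n (wSeg 1 (m + 1)) := validW_wSeg (by omega) (by omega)
    have hvE : ValidW n (wE m) := validW_wE (by omega)
    have hx1 : prodW f (wSeg 1 (m + 1)) x ∈ G := prodW_mem f G n hf1 hvSeg hx
    have hfx : f (1 + (m + 1)) x ∈ G := hf1 _ (by omega) (by omega) x hx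
    have lhs : prodW f (wSeg 1 (m + 1 + 1)) (prodW f (wE (m + 1)) x)
        = prodW f (wE m) (f (1 + (m + 1)) x) := by
      rw [wSeg_succ, prodW_cons, wE_succ, prodW_append, ih hm2 _ hx1,
        prodW_rev_cancel f G n hf1 hf2 hvSeg hx]
      exact letter_comm_word f n hf3 hvE
        (fun j hj => by have := mem_wE hj; left; omega) x
    have rhs : prodW f (wE (m + 1)) (prodW f (wSeg 1 (m + 1 + 1)).reverse x)
        = prodW f (wE m) (f (1 + (m + 1)) x) := by
      rw [wSeg_succ, List.reverse_cons, prodW_append, wE_succ, prodW_append]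
      have : prodW f [1 + (m + 1)] x = f (1 + (m + 1)) x := rfl
      rw [this, prodW_cancel_rev f G n hf1 hf2 hvSeg hfx]
    rw [lhs, rhs]

include hf1 hf2 hf3 in
lemma lemEsq : ∀ m, m + 1 ≤ n → ∀ x ∈ G,
    prodW f (wE m) (prodW f (wE m) x) = x := by
  intro m
  induction m with
  | zero => intro _ x _; rfl
  | succ m ih =>
    intro h x hx
    have hm2 : m + 2 ≤ n := h
    have hvSeg : ValidW n (wSeg 1 (m + 1)) := validW_wSeg (by omega) (by omega)
    have hx1 : prodW f (wSeg 1 (m + 1)) x ∈ G := prodW_mem f G n hf1 hvSeg hx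
    rw [wE_succ, prodW_append, prodW_append, lemC f G n hf1 hf2 hf3 m hm2 _ hx1,
      prodW_rev_cancel f G n hf1 hf2 hvSeg hx]
    exact ih (by omega) x hx

include hf1 hf2 hf3 in
lemma lemRE : ∀ m, m + 2 ≤ n → ∀ x ∈ G,
    prodW f (wSeg 1 (m + 1)) (prodW f (wE (m + 1)) x) = prodW f (wE m) x := by
  intro m h x hx
  have hvSeg : ValidW n (wSeg 1 (m + 1)) := validW_wSeg (by omega) (by omega)
  have hx1 : prodW f (wSeg 1 (m + 1)) x ∈ G := prodW_mem f G n hf1 hvSeg hx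
  rw [wE_succ, prodW_append, lemC f G n hf1 hf2 hf3 m h _ hx1,
    prodW_rev_cancel f G n hf1 hf2 hvSeg hx]

include hf1 hf2 hf3 in
lemma lemClaim : ∀ m, m + 2 ≤ n → ∀ x ∈ G,
    (prodW f (wSeg 1 (n - 1)))^[m + 1] (prodW f (wE m) x)
      = prodW f (wDfun n 1 (m + 1)) x := by
  intro m
  induction m with
  | zero =>
    intro h x hx
    have : wDfun n 1 1 = wSeg 1 (n - 1) ++ ([] : List ℕ) := by
      show wSeg 1 (n - 1) ++ wDfun n 2 0 = _
      rfl
    rw [this, List.append_nil, Function.iterate_one]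
    rfl
  | succ m ih =>
    intro h x hx
    have hm2 : m + 2 ≤ n := by omega
    have hsplit : wSeg 1 (n - 1) = wSeg (m + 2) (n - (m + 2)) ++ wSeg 1 (m + 1) := by
      have e : n - 1 = (n - (m + 2)) + (m + 1) := by omega
      rw [e, wSeg_append]
      congr 2
      omega
    have hvBig : ValidW n (wSeg (m + 2) (n - (m + 2))) := validW_wSeg (by omega) (by omega)
    have hvE : ValidW n (wE m) := validW_wE (by omega)
    have hx' : prodW f (wSeg (m + 2) (n - (m + 2))) x ∈ G := prodW_mem f G n hf1 hvBig hx
    have step1 : prodW f (wSeg 1 (n - 1)) (prodW f (wE (m + 1)) x)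
        = prodW f (wE m) (prodW f (wSeg (m + 2) (n - (m + 2))) x) := by
      rw [hsplit, prodW_append, lemRE f G n hf1 hf2 hf3 m hm2 _ hx]
      exact word_comm_word f n hf3 (l1 := wSeg (m + 2) (n - (m + 2))) (l2 := wE m) hvE
        (fun i hi j hj => by
          have h1 := mem_wSeg.mp hi
          have h2 := mem_wE hj
          left; omega) x
    rw [Function.iterate_succ_apply, step1, ih hm2 _ hx', ← prodW_append]
    have e2 := wDfun_append n 1 (m + 1)
    rw [show (1 : ℕ) + (m + 1) = m + 2 by omega] at e2
    rw [← e2]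

include hf1 hf2 hf3 in
lemma absDE : ∀ x ∈ G, (prodW f (wSeg 1 (n - 1)))^[n] (prodW f (wE (n - 1)) x)
    = prodW f (wDfun n 1 (n - 1)) x := by
  intro x hx
  match n, hf1, hf2, hf3 with
  | 0, hf1, hf2, hf3 => rfl
  | 1, hf1, hf2, hf3 => simp [wE, wDfun, Function.iterate_one]; rfl
  | (m + 2), hf1, hf2, hf3 =>
    have e1 : m + 2 - 1 = m + 1 := by omega
    have hcl := lemClaim f G (m + 2) hf1 hf2 hf3 m (by omega) x hx
    rw [e1] at hcl ⊢
    show (prodW f (wSeg 1 (m + 1)))^[(m + 1) + 1] (prodW f (wE (m + 1)) x)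
        = prodW f (wDfun (m + 2) 1 (m + 1)) x
    rw [Function.iterate_succ_apply]
    have hre := lemRE f G (m + 2) hf1 hf2 hf3 m (by omega) x hx
    rw [hre]
    exact hcl

include hf1 hf2 hf3 in
lemma absPE : 2 ≤ n → ∀ x ∈ G,
    prodW f (wSeg 1 (n - 1)) (prodW f (wE (n - 1)) x) = prodW f (wE (n - 2)) x := by
  intro h x hx
  have e1 : n - 1 = (n - 2) + 1 := by omega
  rw [e1]
  exact lemRE f G n hf1 hf2 hf3 (n - 2) (by omega) x hx
include hf1 hf2 in
lemma absEPi : 2 ≤ n → ∀ x ∈ G,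
    prodW f (wE (n - 1)) (prodW f (wSeg 1 (n - 1)).reverse x) = prodW f (wE (n - 2)) x := by
  intro h x hx
  have e : n - 1 = (n - 2) + 1 := by omega
  rw [e, wE_succ, prodW_append,
    prodW_cancel_rev f G n hf1 hf2 (validW_wSeg (by omega) (by omega)) hx]
end Alg
section Inst
variable {r : ℕ}

lemma BKseg_eq (a : ℕ) : ∀ m (T : ℕ → GP r), BKseg a m T = prodW BK (wSeg a m) T
  | 0, T => rfl
  | m + 1, T => by
    show BK (a + m) (BKseg a m T) = prodW BK ((a + m) :: wSeg a m) T
    rw [BKseg_eq a m T, prodW_cons]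

lemma BKsegRev_eq (a : ℕ) : ∀ m (T : ℕ → GP r),
    BKsegRev a m T = prodW BK (wSeg a m).reverse T
  | 0, T => rfl
  | m + 1, T => by
    show BKsegRev a m (BK (a + m) T) = prodW BK ((a + m) :: wSeg a m).reverse T
    rw [BKsegRev_eq a m _, List.reverse_cons, prodW_append]
    rfl

lemma evacAux_eq : ∀ m (T : ℕ → GP r), evacAux m T = prodW BK (wE m) T
  | 0, T => rfl
  | m + 1, T => by
    show evacAux m (BKseg 1 (m + 1) T) = prodW BK (wE m ++ wSeg 1 (m + 1)) T
    rw [evacAux_eq m _, prodW_append, BKseg_eq]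

lemma devacAux_eq (n : ℕ) : ∀ m, m ≤ n → ∀ T : ℕ → GP r,
    devacAux n m T = prodW BK (wDfun n (n - m) m) T
  | 0, _, T => rfl
  | m + 1, h, T => by
    show BKseg (n - (m + 1)) (m + 1) (devacAux n m T) = _
    rw [devacAux_eq n m (by omega) T, BKseg_eq]
    rw [show wDfun n (n - (m + 1)) (m + 1)
        = wSeg (n - (m + 1)) (n - (n - (m + 1))) ++ wDfun n (n - (m + 1) + 1) m from rfl]
    rw [show n - (n - (m + 1)) = m + 1 by omega, show n - (m + 1) + 1 = n - m by omega,
      prodW_append]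

lemma promo_eq (n : ℕ) (T : ℕ → GP r) : promo n T = prodW BK (wSeg 1 (n - 1)) T :=
  BKseg_eq 1 (n - 1) T

lemma promoInv_eq (n : ℕ) (T : ℕ → GP r) :
    promoInv n T = prodW BK (wSeg 1 (n - 1)).reverse T := BKsegRev_eq 1 (n - 1) T

lemma evac_eq (n : ℕ) (T : ℕ → GP r) : evac n T = prodW BK (wE (n - 1)) T :=
  evacAux_eq (n - 1) T

lemma devac_eq (n : ℕ) (T : ℕ → GP r) : devac n T = prodW BK (wDfun n 1 (n - 1)) T := by
  rcases Nat.eq_zero_or_pos n with h | h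
  · subst h; rfl
  · have := devacAux_eq n (n - 1) (by omega) T
    rwa [show n - (n - 1) = 1 by omega] at this
end Inst

lemma map_wSeg (n : ℕ) : ∀ m a b, a + m + b = n + 1 →
    (wSeg a m).map (n - ·) = (wSeg b m).reverse := by
  intro m
  induction m with
  | zero => intro a b _; rfl
  | succ m ih =>
    intro a b h
    have h1 : (wSeg a (m + 1)).map (n - ·) = (n - (a + m)) :: (wSeg a m).map (n - ·) := rfl
    rw [h1, ih a (b + 1) (by omega), show n - (a + m) = b by omega]
    have h2 : wSeg b (m + 1) = wSeg (b + 1) m ++ wSeg b 1 := wSeg_append b m 1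
    rw [h2, List.reverse_append]
    have h3 : wSeg b 1 = [b] := by show [b + 0] = [b]; rw [Nat.add_zero]
    rw [h3]
    rfl

lemma map_wE (n : ℕ) : ∀ m, m + 1 ≤ n →
    (wE m).map (n - ·) = (wDfun n (n - m) m).reverse := by
  intro m
  induction m with
  | zero => intro _; rfl
  | succ m ih =>
    intro h
    rw [wE_succ, List.map_append, ih (by omega), map_wSeg n (m + 1) 1 (n - m - 1) (by omega)]
    have h2 : wDfun n (n - (m + 1)) (m + 1)
        = wSeg (n - (m + 1)) (n - (n - (m + 1))) ++ wDfun n (n - (m + 1) + 1) m := rfl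
    rw [h2, show n - (n - (m + 1)) = m + 1 by omega, show n - (m + 1) + 1 = n - m by omega,
      List.reverse_append, show n - m - 1 = n - (m + 1) by omega]

lemma map_wDfun (n : ℕ) : ∀ m, m + 1 ≤ n →
    (wDfun n (n - m) m).map (n - ·) = (wE m).reverse := by
  intro m
  induction m with
  | zero => intro _; rfl
  | succ m ih =>
    intro h
    have h2 : wDfun n (n - (m + 1)) (m + 1)
        = wSeg (n - (m + 1)) (n - (n - (m + 1))) ++ wDfun n (n - (m + 1) + 1) m := rfl
    rw [h2, show n - (n - (m + 1)) = m + 1 by omega, show n - (m + 1) + 1 = n - m by omega,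
      List.map_append, ih (by omega), map_wSeg n (m + 1) (n - (m + 1)) 1 (by omega),
      wE_succ, List.reverse_append]

section Mirror
variable {r n : ℕ}

lemma prodW_gBK (l : List ℕ) (T : ℕ → GP r) :
    prodW (fun i => BK (n - i)) l T = prodW BK (l.map (n - ·)) T := by
  induction l with
  | nil => rfl
  | cons a l ih =>
    show BK (n - a) (prodW (fun i => BK (n - i)) l T) = prodW BK ((n - a) :: l.map (n - ·)) T
    rw [prodW_cons, ih]

def Gset (r n : ℕ) : Set (ℕ → GP r) := {T | ∃ c, IsSkewFT r n T c}

lemma hBK1 : ∀ i, 1 ≤ i → i + 1 ≤ n → ∀ T ∈ Gset r n, BK i T ∈ Gset r n :=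
  fun i h1 h2 T ⟨c, hc⟩ => ⟨_, BK_isSkewFT i h1 h2 hc⟩

lemma hBK2 : ∀ i, 1 ≤ i → i + 1 ≤ n → ∀ T ∈ Gset r n, BK i (BK i T) = T :=
  fun i h1 h2 T ⟨c, hc⟩ => BK_invol i h1 h2 hc

lemma hBK3 : ∀ i j, 1 ≤ i → i + 2 ≤ j → j + 1 ≤ n →
    ∀ T : ℕ → GP r, BK i (BK j T) = BK j (BK i T) :=
  fun i j _ h2 _ T => BK_comm h2 T

lemma hgBK1 : ∀ i, 1 ≤ i → i + 1 ≤ n → ∀ T ∈ Gset r n, BK (n - i) T ∈ Gset r n :=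
  fun i h1 h2 => hBK1 (n - i) (by omega) (by omega)

lemma hgBK2 : ∀ i, 1 ≤ i → i + 1 ≤ n → ∀ T ∈ Gset r n, BK (n - i) (BK (n - i) T) = T :=
  fun i h1 h2 => hBK2 (n - i) (by omega) (by omega)

lemma hgBK3 : ∀ i j, 1 ≤ i → i + 2 ≤ j → j + 1 ≤ n →
    ∀ T : ℕ → GP r, BK (n - i) (BK (n - j) T) = BK (n - j) (BK (n - i) T) :=
  fun i j h1 h2 h3 T => (BK_comm (show (n - j) + 2 ≤ n - i by omega) T).symm

end Mirror
section Fin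
variable {r n : ℕ}

lemma IsSkewFT_congr {T : ℕ → GP r} {c c' : ℕ → ℤ} (h : ∀ j < n, c j = c' j) :
    IsSkewFT r n T c → IsSkewFT r n T c' :=
  fun ⟨h1, h2⟩ => ⟨h1, fun j hj => h j hj ▸ h2 j hj⟩

lemma validSeg : ValidW n (wSeg 1 (n - 1)) := by
  intro i hi; have := mem_wSeg.mp hi; omega

lemma validE : ValidW n (wE (n - 1)) := by
  intro i hi; have := mem_wE hi; omega

lemma validD : ValidW n (wDfun n 1 (n - 1)) := validW_wDfun (by omega)

lemma cEsq {x : ℕ → GP r} (hx : x ∈ Gset r n) :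
    prodW BK (wE (n - 1)) (prodW BK (wE (n - 1)) x) = x := by
  rcases Nat.eq_zero_or_pos n with h | h
  · subst h; rfl
  · exact lemEsq BK (Gset r n) n hBK1 hBK2 hBK3 (n - 1) (by omega) x hx

lemma memE {x : ℕ → GP r} (hx : x ∈ Gset r n) : prodW BK (wE (n - 1)) x ∈ Gset r n :=
  prodW_mem BK (Gset r n) n hBK1 validE hx

lemma memD {x : ℕ → GP r} (hx : x ∈ Gset r n) : prodW BK (wDfun n 1 (n - 1)) x ∈ Gset r n :=
  prodW_mem BK (Gset r n) n hBK1 validD hx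

lemma memP {x : ℕ → GP r} (hx : x ∈ Gset r n) : prodW BK (wSeg 1 (n - 1)) x ∈ Gset r n :=
  prodW_mem BK (Gset r n) n hBK1 validSeg hx

lemma memPi {x : ℕ → GP r} (hx : x ∈ Gset r n) :
    prodW BK (wSeg 1 (n - 1)).reverse x ∈ Gset r n :=
  prodW_mem BK (Gset r n) n hBK1 (validW_reverse n validSeg) hx

lemma cErev {x : ℕ → GP r} (hx : x ∈ Gset r n) :
    prodW BK (wE (n - 1)).reverse x = prodW BK (wE (n - 1)) x := by
  have h1 := prodW_rev_cancel BK (Gset r n) n hBK1 hBK2 validE (memE hx)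
  rwa [cEsq hx] at h1

-- mirror translations (n ≥ 1)
lemma gE_eq (h : 1 ≤ n) (x : ℕ → GP r) :
    prodW (fun i => BK (n - i)) (wE (n - 1)) x = prodW BK (wDfun n 1 (n - 1)).reverse x := by
  rw [prodW_gBK, map_wE n (n - 1) (by omega), show n - (n - 1) = 1 by omega]

lemma gD_eq (h : 1 ≤ n) (x : ℕ → GP r) :
    prodW (fun i => BK (n - i)) (wDfun n 1 (n - 1)) x = prodW BK (wE (n - 1)).reverse x := by
  rw [prodW_gBK]
  have := map_wDfun n (n - 1) (by omega)
  rw [show n - (n - 1) = 1 by omega] at this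
  rw [this]

lemma gSeg_eq (h : 1 ≤ n) (x : ℕ → GP r) :
    prodW (fun i => BK (n - i)) (wSeg 1 (n - 1)) x = prodW BK (wSeg 1 (n - 1)).reverse x := by
  rw [prodW_gBK, map_wSeg n (n - 1) 1 1 (by omega)]

lemma gSegRev_eq (h : 1 ≤ n) (x : ℕ → GP r) :
    prodW (fun i => BK (n - i)) (wSeg 1 (n - 1)).reverse x = prodW BK (wSeg 1 (n - 1)) x := by
  rw [prodW_gBK, List.map_reverse, map_wSeg n (n - 1) 1 1 (by omega), List.reverse_reverse]

lemma cDrev {x : ℕ → GP r} (hx : x ∈ Gset r n) :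
    prodW BK (wDfun n 1 (n - 1)).reverse x = prodW BK (wDfun n 1 (n - 1)) x := by
  rcases Nat.eq_zero_or_pos n with h | h
  · subst h; rfl
  · have hu2 : ∀ y ∈ Gset r n,
        prodW BK (wDfun n 1 (n - 1)).reverse (prodW BK (wDfun n 1 (n - 1)).reverse y) = y := by
      intro y hy
      have := lemEsq (fun i => BK (n - i)) (Gset r n) n hgBK1 hgBK2 hgBK3 (n - 1)
        (by omega) y hy
      rwa [gE_eq h, gE_eq h] at this
    have h3 := prodW_rev_cancel BK (Gset r n) n hBK1 hBK2 validD hx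
    have h4 := congrArg (prodW BK (wDfun n 1 (n - 1)).reverse) h3
    rw [hu2 _ (memD hx)] at h4
    exact h4.symm

lemma cDsq {x : ℕ → GP r} (hx : x ∈ Gset r n) :
    prodW BK (wDfun n 1 (n - 1)) (prodW BK (wDfun n 1 (n - 1)) x) = x := by
  rw [← cDrev (memD hx)]
  exact prodW_rev_cancel BK (Gset r n) n hBK1 hBK2 validD hx

lemma cDE {x : ℕ → GP r} (hx : x ∈ Gset r n) :
    (prodW BK (wSeg 1 (n - 1)))^[n] (prodW BK (wE (n - 1)) x)
      = prodW BK (wDfun n 1 (n - 1)) x :=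
  absDE BK (Gset r n) n hBK1 hBK2 hBK3 x hx

lemma cED (h : 1 ≤ n) {x : ℕ → GP r} (hx : x ∈ Gset r n) :
    (prodW BK (wSeg 1 (n - 1)).reverse)^[n] (prodW BK (wDfun n 1 (n - 1)) x)
      = prodW BK (wE (n - 1)) x := by
  have habs := absDE (fun i => BK (n - i)) (Gset r n) n hgBK1 hgBK2 hgBK3 x hx
  have hfun : prodW (fun i => BK (n - i)) (wSeg 1 (n - 1))
      = prodW (BK (r := r)) (wSeg 1 (n - 1)).reverse := funext (gSeg_eq h)
  rw [hfun, gE_eq h, gD_eq h, cDrev hx, cErev hx] at habs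
  exact habs
lemma cPE (h : 2 ≤ n) {x : ℕ → GP r} (hx : x ∈ Gset r n) :
    prodW BK (wSeg 1 (n - 1)) (prodW BK (wE (n - 1)) x) = prodW BK (wE (n - 2)) x :=
  absPE BK (Gset r n) n hBK1 hBK2 hBK3 h x hx

lemma cEPi (h : 2 ≤ n) {x : ℕ → GP r} (hx : x ∈ Gset r n) :
    prodW BK (wE (n - 1)) (prodW BK (wSeg 1 (n - 1)).reverse x) = prodW BK (wE (n - 2)) x :=
  absEPi BK (Gset r n) n hBK1 hBK2 h x hx

/-- `P⁻¹ ∘ D = D ∘ P` on tableaux (mirror of `P ∘ E = E ∘ P⁻¹`). -/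
lemma cPiD (h : 2 ≤ n) {x : ℕ → GP r} (hx : x ∈ Gset r n) :
    prodW BK (wSeg 1 (n - 1)).reverse (prodW BK (wDfun n 1 (n - 1)) x)
      = prodW BK (wDfun n 1 (n - 1)) (prodW BK (wSeg 1 (n - 1)) x) := by
  have h1 : 1 ≤ n := by omega
  have hA := absPE (fun i => BK (n - i)) (Gset r n) n hgBK1 hgBK2 hgBK3 h x hx
  have hB := absEPi (fun i => BK (n - i)) (Gset r n) n hgBK1 hgBK2 h x hx
  -- translate hA : Pi (Dv x) = prodW g (wE (n-2)) x
  rw [gE_eq h1, cDrev hx, gSeg_eq h1] at hA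
  -- translate hB : Evg (P x) = prodW g (wE (n-2)) x
  rw [gSegRev_eq h1, gE_eq h1, cDrev (memP hx)] at hB
  rw [hA, hB]

lemma cPPi {x : ℕ → GP r} (hx : x ∈ Gset r n) :
    prodW BK (wSeg 1 (n - 1)) (prodW BK (wSeg 1 (n - 1)).reverse x) = x :=
  prodW_cancel_rev BK (Gset r n) n hBK1 hBK2 validSeg hx

lemma cPiP {x : ℕ → GP r} (hx : x ∈ Gset r n) :
    prodW BK (wSeg 1 (n - 1)).reverse (prodW BK (wSeg 1 (n - 1)) x) = x :=
  prodW_rev_cancel BK (Gset r n) n hBK1 hBK2 validSeg hx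

lemma cPD (h : 2 ≤ n) {x : ℕ → GP r} (hx : x ∈ Gset r n) :
    prodW BK (wSeg 1 (n - 1)) (prodW BK (wDfun n 1 (n - 1)) x)
      = prodW BK (wDfun n 1 (n - 1)) (prodW BK (wSeg 1 (n - 1)).reverse x) := by
  have h5 := cPiD h (memPi hx)
  rw [cPPi hx] at h5
  have h6 := congrArg (prodW BK (wSeg 1 (n - 1))) h5
  rw [cPPi (memD (memPi hx))] at h6
  exact h6.symm
end Fin
section Typ
variable {r n : ℕ}

lemma BKseg_type : ∀ m, m + 1 ≤ n → ∀ (T : ℕ → GP r) (c : ℕ → ℤ), IsSkewFT r n T c →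
    IsSkewFT r n (BKseg 1 m T)
      (fun j => if j < m then c (j + 1) else if j = m then c 0 else c j) := by
  intro m
  induction m with
  | zero =>
    intro _ T c hT
    refine IsSkewFT_congr (fun j hj => ?_) hT
    split_ifs with h1 h2
    · exact absurd h1 (by omega)
    · rw [h2]
    · rfl
  | succ m ih =>
    intro h T c hT
    have prev := ih (by omega) T c hT
    have happ := BK_isSkewFT (1 + m) (by omega) (by omega) prev
    have e1 : BKseg 1 (m + 1) T = BK (1 + m) (BKseg 1 m T) := rfl
    rw [e1]
    refine IsSkewFT_congr (fun j hj => ?_) happ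
    split_ifs <;> first | rfl | (congr 1; omega) | (exfalso; omega)

lemma BKsegRev_type : ∀ m, m + 1 ≤ n → ∀ (T : ℕ → GP r) (d : ℕ → ℤ), IsSkewFT r n T d →
    IsSkewFT r n (BKsegRev 1 m T)
      (fun j => if j = 0 then d m else if j ≤ m then d (j - 1) else d j) := by
  intro m
  induction m with
  | zero =>
    intro _ T d hT
    refine IsSkewFT_congr (fun j hj => ?_) hT
    split_ifs with h1 h2
    · rw [h1]
    · have : j = 0 := by omega
      exact absurd this h1
    · rfl
  | succ m ih =>
    intro h T d hT
    have h1 := BK_isSkewFT (1 + m) (by omega) (by omega) hT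
    have h2 := ih (by omega) (BK (1 + m) T) _ h1
    have e1 : BKsegRev 1 (m + 1) T = BKsegRev 1 m (BK (1 + m) T) := rfl
    rw [e1]
    refine IsSkewFT_congr (fun j hj => ?_) h2
    split_ifs <;> first | rfl | (congr 1; omega) | (exfalso; omega)

end Typ

end AuxProofs

/-- **Lemma (dihedral relations).** On length-`n` skew fluctuating tableaux with `r`
rows: (i) promotion `P` is a bijection from tableaux of type `(c_1,…,c_n)` to tableaux
of type `(c_2,…,c_n,c_1)`; (ii) `E ∘ E = id` and `E* ∘ E* = id`;
(iii) `E* ∘ E = P^n` and `E ∘ E* = P^{-n}`;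
(iv) `P ∘ E = E ∘ P⁻¹` and `P ∘ E* = E* ∘ P⁻¹`. -/
theorem dihedral_relations (r n : ℕ) :
    (∀ c : ℕ → ℤ,
      Set.BijOn (promo n) {T : ℕ → GP r | IsSkewFT r n T c}
        {T : ℕ → GP r | IsSkewFT r n T fun j => if j = n - 1 then c 0 else c (j + 1)}) ∧
    (∀ (T : ℕ → GP r) (c : ℕ → ℤ), IsSkewFT r n T c → evac n (evac n T) = T) ∧
    (∀ (T : ℕ → GP r) (c : ℕ → ℤ), IsSkewFT r n T c → devac n (devac n T) = T) ∧
    (∀ (T : ℕ → GP r) (c : ℕ → ℤ), IsSkewFT r n T c →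
      devac n (evac n T) = (promo n)^[n] T) ∧
    (∀ (T : ℕ → GP r) (c : ℕ → ℤ), IsSkewFT r n T c →
      evac n (devac n T) = (promoInv n)^[n] T) ∧
    (∀ (T : ℕ → GP r) (c : ℕ → ℤ), IsSkewFT r n T c →
      promo n (evac n T) = evac n (promoInv n T)) ∧
    (∀ (T : ℕ → GP r) (c : ℕ → ℤ), IsSkewFT r n T c →
      promo n (devac n T) = devac n (promoInv n T)) := by
  refine ⟨?_, ?_, ?_, ?_, ?_, ?_, ?_⟩
  · -- (i) promotion is a bijection
    intro c
    rcases Nat.eq_zero_or_pos n with hn | hn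
    · subst hn
      refine ⟨fun T hT => ?_, fun T1 h1 T2 h2 he => he, fun T hT => ⟨T, ?_, rfl⟩⟩
      · exact IsSkewFT_congr (fun j hj => absurd hj (Nat.not_lt_zero j)) hT
      · exact IsSkewFT_congr (fun j hj => absurd hj (Nat.not_lt_zero j)) hT
    · refine ⟨fun T hT => ?_, fun T1 h1 T2 h2 he => ?_, fun T hT => ⟨promoInv n T, ?_, ?_⟩⟩
      · -- maps to
        have h2 := BKseg_type (n - 1) (by omega) T c hT
        show IsSkewFT r n (BKseg 1 (n - 1) T) _
        refine IsSkewFT_congr (fun j hj => ?_) h2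
        split_ifs <;> first | rfl | (congr 1; omega) | (exfalso; omega)
      · -- injective
        have k1 : promoInv n (promo n T1) = T1 := by
          rw [promo_eq, promoInv_eq]; exact cPiP ⟨c, h1⟩
        have k2 : promoInv n (promo n T2) = T2 := by
          rw [promo_eq, promoInv_eq]; exact cPiP ⟨c, h2⟩
        rw [← k1, ← k2, he]
      · -- preimage membership
        have h2 := BKsegRev_type (n - 1) (by omega) T _ hT
        show IsSkewFT r n (BKsegRev 1 (n - 1) T) c
        refine IsSkewFT_congr (fun j hj => ?_) h2
        split_ifs <;> first | rfl | (congr 1; omega) | (exfalso; omega)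
      · rw [promo_eq, promoInv_eq]
        exact cPPi ⟨_, hT⟩
  · -- (ii) E ∘ E = id
    intro T c hT
    rw [evac_eq, evac_eq]
    exact cEsq ⟨c, hT⟩
  · -- (ii') E* ∘ E* = id
    intro T c hT
    rw [devac_eq, devac_eq]
    exact cDsq ⟨c, hT⟩
  · -- (iii) E* ∘ E = Pⁿ
    intro T c hT
    have hx : T ∈ Gset r n := ⟨c, hT⟩
    have hfP : promo (r := r) n = prodW BK (wSeg 1 (n - 1)) := funext (promo_eq n)
    rw [hfP, devac_eq, evac_eq]
    have h1 := cDE (memE hx)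
    rw [cEsq hx] at h1
    exact h1.symm
  · -- (iii') E ∘ E* = P⁻ⁿ
    intro T c hT
    have hx : T ∈ Gset r n := ⟨c, hT⟩
    rcases Nat.eq_zero_or_pos n with hn | hn
    · subst hn; rfl
    · have hfPi : promoInv (r := r) n = prodW BK (wSeg 1 (n - 1)).reverse := funext (promoInv_eq n)
      rw [hfPi, evac_eq, devac_eq]
      have h1 := cED hn (memD hx)
      rw [cDsq hx] at h1
      exact h1.symm
  · -- (iv) P ∘ E = E ∘ P⁻¹
    intro T c hT
    have hx : T ∈ Gset r n := ⟨c, hT⟩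
    rcases lt_or_ge n 2 with hn | hn
    · obtain (rfl | rfl) : n = 0 ∨ n = 1 := by omega
      · rfl
      · rfl
    · rw [promo_eq, evac_eq, evac_eq, promoInv_eq, cPE hn hx, cEPi hn hx]
  · -- (iv') P ∘ E* = E* ∘ P⁻¹
    intro T c hT
    have hx : T ∈ Gset r n := ⟨c, hT⟩
    rcases lt_or_ge n 2 with hn | hn
    · obtain (rfl | rfl) : n = 0 ∨ n = 1 := by omega
      · rfl
      · rfl
    · rw [promo_eq, devac_eq, devac_eq, promoInv_eq]
      exact cPD hn hx

end FT
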